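/- Suppose P contains d+1 affinely independent points, and let ℓ be a line in ℝ^d (a one-dimensional affine subspace). Then there exists a point x ∈ ℓ minimizing D_P over ℓ (i.e., D_P(x) ≤ D_P(y) for all y ∈ ℓ) such that x lies on some hyperplane determined by P, i.e., x ∈ affineSpan s for some s ∈ S_P. -/

import Mathlib

open scoped Classical

/-- The set `S_P` of `d`-element affinely independent subsets of `P`;
each determines an affine hyperplane of `ℝ^d` (its affine span). -/
noncomputable def hddSet (d : ℕ) (P : Finset (EuclideanSpace ℝ (Fin d))) :
    Finset (Finset (EuclideanSpace ℝ (Fin d))) :=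
  (P.powersetCard d).filter
    (fun s => AffineIndependent ℝ
      (fun x : (s : Set (EuclideanSpace ℝ (Fin d))) => (x : EuclideanSpace ℝ (Fin d))))

/-- Hyperplane distance depth: the sum, over all hyperplanes determined by `P`,
of the Euclidean distance from `q` to the hyperplane. -/
noncomputable def hddDepth (d : ℕ) (P : Finset (EuclideanSpace ℝ (Fin d)))
    (q : EuclideanSpace ℝ (Fin d)) : ℝ :=
  ∑ s ∈ hddSet d P,
    Metric.infDist q
      (affineSpan ℝ (s : Set (EuclideanSpace ℝ (Fin d))) : Set (EuclideanSpace ℝ (Fin d)))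

/-!
Parametrise `ℓ` as `t ↦ t • v +ᵥ p`. The distance to a hyperplane with unit normal `n` through `q`
is `|⟪n, x -ᵥ q⟫|`, so along `ℓ` the depth is a sum `∑ |αₛ t + βₛ|`. No nonzero vector is parallel
to every facet of a `d`-simplex, so some `αₛ ≠ 0`; the sum is then coercive and has a largest
minimiser `t₀`. If no term vanished at `t₀`, the sum would be affine near `t₀`, hence constant
there, and `t₀` would not be the largest minimiser.
-/

open Filter Topology Metric Module
open scoped RealInnerProductSpace

theorem abs_add_add_abs_sub_eq_two_mul_abs {a b : ℝ} (h : |b| ≤ |a|) :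
    |a + b| + |a - b| = 2 * |a| := by
  obtain ⟨hb₁, hb₂⟩ := abs_le.mp h
  rcases le_total 0 a with ha | ha
  · rw [abs_of_nonneg ha] at hb₁ hb₂ ⊢
    rw [abs_of_nonneg (by linarith), abs_of_nonneg (by linarith)]
    ring
  · rw [abs_of_nonpos ha] at hb₁ hb₂ ⊢
    rw [abs_of_nonpos (by linarith), abs_of_nonpos (by linarith)]
    ring

theorem Continuous.exists_isGreatest_setOf_forall_le {X : Type*} [TopologicalSpace X]
    [LinearOrder X] [ClosedIciTopology X] [ClosedIicTopology X] [Nonempty X] {f : X → ℝ}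
    (hf : Continuous f) (hlim : Tendsto f (cocompact X) atTop) :
    ∃ t, IsGreatest {t | ∀ u, f t ≤ f u} t := by
  obtain ⟨m, hm⟩ := hf.exists_forall_le hlim
  obtain ⟨K, hK, hKf⟩ := Filter.mem_cocompact.mp (hlim.eventually (eventually_gt_atTop (f m)))
  have hsub : {u | f u ≤ f m} ⊆ K := fun u (hu : f u ≤ f m) => by
    by_contra huK
    exact (hKf huK).not_ge hu
  obtain ⟨t, ht, htmax⟩ :=
    (hK.of_isClosed_subset (isClosed_le hf continuous_const) hsub).exists_isGreatest
      ⟨m, le_refl (f m)⟩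
  exact ⟨t, fun u => ht.trans (hm u), fun u hu => htmax (hu m)⟩

section SumAbsAffine

variable {ι : Type*} (S : Finset ι) (α β : ι → ℝ)

theorem tendsto_sum_abs_mul_add_cocompact_atTop {i₀ : ι} (hi₀ : i₀ ∈ S) (hα : α i₀ ≠ 0) :
    Tendsto (fun t => ∑ i ∈ S, |α i * t + β i|) (cocompact ℝ) atTop := by
  refine tendsto_atTop_mono (fun t => ?_) (tendsto_atTop_add_const_right _ (-|β i₀|)
    (tendsto_norm_cocompact_atTop.const_mul_atTop (abs_pos.mpr hα)))
  calc |α i₀| * ‖t‖ + -|β i₀| ≤ |α i₀ * t + β i₀| := by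
        have := abs_add_le (α i₀ * t + β i₀) (-β i₀)
        rw [add_neg_cancel_right, abs_neg, abs_mul] at this
        rw [Real.norm_eq_abs]
        linarith
    _ ≤ ∑ i ∈ S, |α i * t + β i| :=
        Finset.single_le_sum (f := fun i => |α i * t + β i|) (fun i _ => abs_nonneg _) hi₀

theorem exists_pos_sum_abs_mul_add_midpoint_eq {t : ℝ}
    (ht : ∀ i ∈ S, α i * t + β i ≠ 0) :
    ∃ h > 0, ∑ i ∈ S, |α i * (t + h) + β i| + ∑ i ∈ S, |α i * (t - h) + β i| =
      2 * ∑ i ∈ S, |α i * t + β i| := by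
  have hsmall : ∀ᶠ h in 𝓝[>] (0 : ℝ), ∀ i ∈ S, |α i * h| ≤ |α i * t + β i| := by
    refine nhdsWithin_le_nhds ((eventually_all_finset S).mpr fun i hi => ?_)
    have hcont : Tendsto (fun h : ℝ => |α i * h|) (𝓝 0) (𝓝 0) := by
      simpa using ((continuous_const_mul (α i)).abs.tendsto 0)
    exact hcont.eventually (ge_mem_nhds (abs_pos.mpr (ht i hi)))
  obtain ⟨h, hle, hpos⟩ := (hsmall.and self_mem_nhdsWithin).exists
  refine ⟨h, hpos, ?_⟩
  rw [← Finset.sum_add_distrib, Finset.mul_sum]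
  refine Finset.sum_congr rfl fun i hi => ?_
  rw [← abs_add_add_abs_sub_eq_two_mul_abs (hle i hi)]
  congr 2 <;> ring

theorem exists_forall_sum_abs_mul_add_le_and_eq_zero {i₀ : ι} (hi₀ : i₀ ∈ S) (hα : α i₀ ≠ 0) :
    ∃ t, (∀ u, ∑ i ∈ S, |α i * t + β i| ≤ ∑ i ∈ S, |α i * u + β i|) ∧
      ∃ i ∈ S, α i * t + β i = 0 := by
  obtain ⟨t, htmin, htmax⟩ := Continuous.exists_isGreatest_setOf_forall_le (by fun_prop)
    (tendsto_sum_abs_mul_add_cocompact_atTop S α β hi₀ hα)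
  refine ⟨t, htmin, ?_⟩
  by_contra! hne
  obtain ⟨h, hpos, hsum⟩ := exists_pos_sum_abs_mul_add_midpoint_eq S α β hne
  have : t + h ≤ t := htmax fun u => by
    linarith [htmin u, htmin (t + h), htmin (t - h)]
  linarith

end SumAbsAffine

theorem AffineSubspace.exists_ne_zero_forall_mem_iff_eq_smul_vadd {k V P : Type*} [Field k]
    [AddCommGroup V] [Module k V] [AddTorsor V P] {ℓ : AffineSubspace k P} {p : P} (hp : p ∈ ℓ)
    (hℓ : finrank k ℓ.direction = 1) :
    ∃ v : V, v ≠ 0 ∧ ∀ y, y ∈ ℓ ↔ ∃ t : k, y = t • v +ᵥ p := by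
  have : Module.Finite k ℓ.direction := Module.finite_of_finrank_eq_succ hℓ
  obtain ⟨⟨v, hvℓ⟩, hv⟩ := finrank_pos_iff_exists_ne_zero.mp (hℓ ▸ Nat.one_pos)
  have hv' : v ≠ 0 := by simpa using hv
  refine ⟨v, hv', fun y => ?_⟩
  rw [← vsub_right_mem_direction_iff_mem hp,
    eq_span_singleton_of_mem_of_finrank_eq_one hℓ hvℓ hv', Submodule.mem_span_singleton]
  simp_rw [eq_vadd_iff_vsub_eq, eq_comm]

theorem AffineBasis.eq_zero_of_forall_mem_vectorSpan_image_compl {ι k V P : Type*} [Finite ι]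
    [Ring k] [AddCommGroup V] [Module k V] [AddTorsor V P] (b : AffineBasis ι k P) {v : V}
    (hv : ∀ j, v ∈ vectorSpan k (b '' {j}ᶜ)) : v = 0 := by
  have hker : ∀ j, vectorSpan k (b '' {j}ᶜ) ≤ LinearMap.ker (b.coord j).linear := fun j => by
    rw [vectorSpan_def, Submodule.span_le]
    rintro _ ⟨_, ⟨m, hm, rfl⟩, _, ⟨m', hm', rfl⟩, rfl⟩
    rw [SetLike.mem_coe, LinearMap.mem_ker, AffineMap.linearMap_vsub,
      b.coord_apply_ne (Ne.symm hm), b.coord_apply_ne (Ne.symm hm'), vsub_self]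
  obtain ⟨p⟩ : Nonempty P := inferInstance
  rw [← vadd_right_cancel_iff p, zero_vadd]
  refine b.ext_elem fun j => ?_
  rw [AffineMap.map_vadd, hker j (hv j), zero_vadd]

theorem Submodule.exists_norm_eq_one_orthogonal_eq_span_singleton {V : Type*}
    [NormedAddCommGroup V] [InnerProductSpace ℝ V] [FiniteDimensional ℝ V] {K : Submodule ℝ V}
    (hK : finrank ℝ K + 1 = finrank ℝ V) : ∃ n : V, ‖n‖ = 1 ∧ Kᗮ = ℝ ∙ n := by
  have hK₁ : finrank ℝ Kᗮ = 1 := by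
    have := K.finrank_add_finrank_orthogonal
    omega
  obtain ⟨⟨w, hwK⟩, hw⟩ := finrank_pos_iff_exists_ne_zero.mp (hK₁ ▸ Nat.one_pos)
  have hw' : w ≠ 0 := by simpa using hw
  refine ⟨NormedSpace.normalize w, NormedSpace.norm_normalize_eq_one_iff.mpr hw',
    eq_span_singleton_of_mem_of_finrank_eq_one hK₁ ?_ ?_⟩
  · rw [← NormedSpace.norm_smul_normalize w] at hwK
    exact (Kᗮ.smul_mem_iff (by simpa using hw')).mp hwK
  · exact (NormedSpace.normalize_eq_zero_iff w).not.mpr hw'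

namespace AffineSubspace

variable {V P : Type*} [NormedAddCommGroup V] [InnerProductSpace ℝ V] [MetricSpace P]
  [NormedAddTorsor V P] {H : AffineSubspace ℝ P} [H.direction.HasOrthogonalProjection] {n : V}

theorem mem_direction_iff_inner_eq_zero (hHn : H.directionᗮ = ℝ ∙ n) {w : V} :
    w ∈ H.direction ↔ ⟪n, w⟫ = 0 := by
  rw [← H.direction.orthogonal_orthogonal, hHn, Submodule.mem_orthogonal_singleton_iff_inner_right]

theorem infDist_eq_abs_inner_vsub (hn : ‖n‖ = 1) (hHn : H.directionᗮ = ℝ ∙ n) {q : P}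
    (hq : q ∈ H) (x : P) : infDist x H = |⟪n, x -ᵥ q⟫| := by
  have : Nonempty H := ⟨⟨q, hq⟩⟩
  set y : P := (EuclideanGeometry.orthogonalProjection H x : P)
  obtain ⟨c, hc⟩ := Submodule.mem_span_singleton.mp
    (hHn ▸ EuclideanGeometry.vsub_orthogonalProjection_mem_direction_orthogonal H x)
  have hyq : ⟪n, y -ᵥ q⟫ = 0 := (mem_direction_iff_inner_eq_zero hHn).mp
    (H.vsub_mem_direction (EuclideanGeometry.orthogonalProjection_mem x) hq)
  have hxq : ⟪n, x -ᵥ q⟫ = c := by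
    rw [← vsub_add_vsub_cancel x y q, inner_add_right, hyq, ← hc, inner_smul_right,
      real_inner_self_eq_norm_sq, hn]
    ring
  rw [← EuclideanGeometry.dist_orthogonalProjection_eq_infDist, dist_eq_norm_vsub V, ← hc, hxq,
    norm_smul, hn, mul_one, Real.norm_eq_abs]

end AffineSubspace

section HyperplaneDistanceDepth

variable {d : ℕ} {P s : Finset (EuclideanSpace ℝ (Fin d))}

theorem mem_hddSet : s ∈ hddSet d P ↔ s ⊆ P ∧ s.card = d ∧
    AffineIndependent ℝ
      (fun x : (s : Set (EuclideanSpace ℝ (Fin d))) => (x : EuclideanSpace ℝ (Fin d))) := by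
  rw [hddSet, Finset.mem_filter, Finset.mem_powersetCard, and_assoc]

theorem image_compl_mem_hddSet {a : Fin (d + 1) → EuclideanSpace ℝ (Fin d)}
    (ha : AffineIndependent ℝ a) (haP : ∀ i, a i ∈ P) (j : Fin (d + 1)) :
    ({j}ᶜ : Finset (Fin (d + 1))).image a ∈ hddSet d P := by
  refine mem_hddSet.mpr ⟨?_, ?_, ha.range.mono ?_⟩
  · simpa [Finset.image_subset_iff] using fun i _ => haP i
  · simp [Finset.card_image_of_injective _ ha.injective, Finset.card_compl]
  · simp [Set.image_subset_iff]

theorem exists_mem_hddSet_notMem_direction {a : Fin (d + 1) → EuclideanSpace ℝ (Fin d)}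
    (ha : AffineIndependent ℝ a) (haP : ∀ i, a i ∈ P) {v : EuclideanSpace ℝ (Fin d)}
    (hv : v ≠ 0) :
    ∃ s ∈ hddSet d P, v ∉ (affineSpan ℝ (s : Set (EuclideanSpace ℝ (Fin d)))).direction := by
  let b : AffineBasis (Fin (d + 1)) ℝ (EuclideanSpace ℝ (Fin d)) :=
    ⟨a, ha, ha.affineSpan_eq_top_iff_card_eq_finrank_add_one.mpr (by simp)⟩
  by_contra! hpar
  refine hv (b.eq_zero_of_forall_mem_vectorSpan_image_compl fun j =>
    show v ∈ vectorSpan ℝ (a '' _) from ?_)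
  simpa [direction_affineSpan] using hpar _ (image_compl_mem_hddSet ha haP j)

theorem exists_unit_normal_of_mem_hddSet (hd : 1 ≤ d) (hs : s ∈ hddSet d P) :
    ∃ n q, ‖n‖ = 1 ∧ (affineSpan ℝ (s : Set (EuclideanSpace ℝ (Fin d)))).directionᗮ = ℝ ∙ n ∧
      q ∈ affineSpan ℝ (s : Set (EuclideanSpace ℝ (Fin d))) := by
  obtain ⟨-, hcard, hind⟩ := mem_hddSet.mp hs
  have hrank := hind.finrank_vectorSpan (n := d - 1) (by
    simp only [Finset.coe_sort_coe, Fintype.card_coe]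
    omega)
  rw [Subtype.range_coe, ← direction_affineSpan] at hrank
  obtain ⟨n, hn, hHn⟩ := Submodule.exists_norm_eq_one_orthogonal_eq_span_singleton
    (K := (affineSpan ℝ (s : Set (EuclideanSpace ℝ (Fin d)))).direction)
    (by rw [hrank, finrank_euclideanSpace_fin]; omega)
  obtain ⟨q, hq⟩ := Finset.card_pos.mp (by omega : 0 < s.card)
  exact ⟨n, q, hn, hHn, subset_affineSpan ℝ _ hq⟩

end HyperplaneDistanceDepth

/-- If `P` contains `d+1` affinely independent points and `ℓ` is a line in `ℝ^d`,
then some point of `ℓ` minimizing the hyperplane distance depth over `ℓ` lies on a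
hyperplane determined by `P`. -/
theorem hddDepth_min_on_line_mem_hyperplane (d : ℕ) (hd : 1 ≤ d)
    (P : Finset (EuclideanSpace ℝ (Fin d)))
    (h : ∃ a : Fin (d + 1) → EuclideanSpace ℝ (Fin d),
      AffineIndependent ℝ a ∧ ∀ i, a i ∈ P)
    (ℓ : AffineSubspace ℝ (EuclideanSpace ℝ (Fin d)))
    (hℓne : (ℓ : Set (EuclideanSpace ℝ (Fin d))).Nonempty)
    (hℓdim : Module.finrank ℝ ℓ.direction = 1) :
    ∃ x ∈ ℓ, (∀ y ∈ ℓ, hddDepth d P x ≤ hddDepth d P y) ∧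
      ∃ s ∈ hddSet d P, x ∈ affineSpan ℝ (s : Set (EuclideanSpace ℝ (Fin d))) := by
  obtain ⟨a, ha, haP⟩ := h
  obtain ⟨p, hp⟩ := hℓne
  obtain ⟨v, hv, hℓ⟩ := AffineSubspace.exists_ne_zero_forall_mem_iff_eq_smul_vadd hp hℓdim
  choose! n q hn hHn hq using
    fun s (hs : s ∈ hddSet d P) => exists_unit_normal_of_mem_hddSet hd hs
  have hdepth (t : ℝ) : hddDepth d P (t • v +ᵥ p) =
      ∑ s ∈ hddSet d P, |⟪n s, v⟫ * t + ⟪n s, p -ᵥ q s⟫| :=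
    Finset.sum_congr rfl fun s hs => by
      rw [AffineSubspace.infDist_eq_abs_inner_vsub (hn s hs) (hHn s hs) (hq s hs),
        vadd_vsub_assoc, inner_add_right, inner_smul_right, mul_comm]
  obtain ⟨s₀, hs₀, hvs₀⟩ := exists_mem_hddSet_notMem_direction ha haP hv
  obtain ⟨t, htmin, s, hs, hts⟩ := exists_forall_sum_abs_mul_add_le_and_eq_zero (hddSet d P)
    (fun s => ⟪n s, v⟫) (fun s => ⟪n s, p -ᵥ q s⟫) hs₀
    (mt (AffineSubspace.mem_direction_iff_inner_eq_zero (hHn s₀ hs₀)).mpr hvs₀)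
  refine ⟨t • v +ᵥ p, (hℓ _).mpr ⟨t, rfl⟩, fun y hy => ?_, s, hs, ?_⟩
  · obtain ⟨u, rfl⟩ := (hℓ y).mp hy
    simpa only [hdepth] using htmin u
  · rw [← AffineSubspace.vsub_right_mem_direction_iff_mem (hq s hs),
      AffineSubspace.mem_direction_iff_inner_eq_zero (hHn s hs), vadd_vsub_assoc, inner_add_right,
      inner_smul_right, mul_comm, hts]
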